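/- arXiv:2605.15773 — 3 statements merged into one kernel-verified Lean document; each statement's English description precedes it below -/
import Mathlib

section
/- Let K↔_4 be the complete digraph on 4 vertices. Then λ_2^c(K↔_4) = 3, and λ_k^c(K↔_4) = 2 for k ∈ {3, 4}. -/
/-!
Every `S`-cycle leaves a vertex `s ∈ S` along some arc, and arc-disjoint cycles leave it along
different arcs, so `λ_S^c(D)` is at most the out-degree of `s`, which is `3` in `K↔_4`. For
`S = {u, v}` the bound is attained by the cycles `u v`, `u w v x` and `u x v w`, while the two
opposite Hamiltonian cycles give `λ_S^c(K↔_4) ≥ 2` for every nonempty `S`.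

If `0, 1, 2 ∈ S`, an `S`-cycle of `K↔_4` runs through `0, 1, 2` in one of the two cyclic orders
(possibly with `3` inserted once), so it uses two arcs of the triangle `0 → 1 → 2 → 0` or two
arcs of the reverse triangle. Among three `S`-cycles two would use the same triangle, which has
only three arcs; hence `λ_S^c(K↔_4) = 2`.
-/

/-- A directed cycle in a digraph `D`, represented by its (nonempty, duplicate-free)
list of vertices in cyclic order; consecutive vertices (cyclically) are joined by arcs. -/
def IsDiCycle {V : Type*} (D : Digraph V) (l : List V) : Prop :=
  l.Nodup ∧ 2 ≤ l.length ∧ ∀ p ∈ l.zip (l.rotate 1), D.Adj p.1 p.2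

/-- The set of arcs traversed by a cycle given by the vertex list `l`. -/
def cycArcs {V : Type*} (l : List V) : Set (V × V) :=
  {p | p ∈ l.zip (l.rotate 1)}

/-- An `S`-cycle: a directed cycle whose vertex set contains `S`. -/
def IsSCycle {V : Type*} (D : Digraph V) (S : Set V) (l : List V) : Prop :=
  IsDiCycle D l ∧ ∀ s ∈ S, s ∈ l

/-- `D` contains `m` pairwise arc-disjoint `S`-cycles. -/
def ArcDisjointSCycles {V : Type*} (D : Digraph V) (S : Set V) (m : ℕ) : Prop :=
  ∃ f : Fin m → List V, (∀ i, IsSCycle D S (f i)) ∧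
    ∀ i j, i ≠ j → Disjoint (cycArcs (f i)) (cycArcs (f j))

/-- `λ_S^c(D)`: the maximum number of pairwise arc-disjoint `S`-cycles in `D`. -/
noncomputable def lambdaS {V : Type*} (D : Digraph V) (S : Set V) : ℕ :=
  sSup {m | ArcDisjointSCycles D S m}

/-- `λ_k^c(D)`: the directed cycle `k`-arc-connectivity of `D`, the minimum of
`λ_S^c(D)` over all vertex subsets `S` of size `k`. -/
noncomputable def lambdaK {V : Type*} [Fintype V] (D : Digraph V) (k : ℕ) : ℕ :=
  sInf {m | ∃ S : Finset V, S.card = k ∧ lambdaS D ↑S = m}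

/-- The complete digraph on `n` vertices: all arcs between distinct vertices. -/
def completeDigraph (n : ℕ) : Digraph (Fin n) :=
  ⟨fun u v => u ≠ v⟩

section General

variable {V : Type*} {D : Digraph V} {S : Set V} {m : ℕ}

lemma exists_mem_cycArcs_of_mem {l : List V} {s : V} (hs : s ∈ l) :
    ∃ t, (s, t) ∈ cycArcs l := by
  obtain ⟨k, hk, rfl⟩ := List.getElem_of_mem hs
  have hk' : k < (l.zip (l.rotate 1)).length := by simpa using hk
  exact ⟨_, show _ ∈ l.zip (l.rotate 1) by
    simpa [List.getElem_zip] using List.getElem_mem hk'⟩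

lemma arcDisjointSCycles_of_pairwise {L : List (List V)} (hL : ∀ l ∈ L, IsSCycle D S l)
    (hd : L.Pairwise fun l l' => Disjoint (cycArcs l) (cycArcs l')) :
    ArcDisjointSCycles D S L.length := by
  refine ⟨fun i => L[i], fun i => hL _ (List.getElem_mem _), fun i j hij => ?_⟩
  rcases lt_or_gt_of_ne hij with h | h
  · exact List.pairwise_iff_getElem.1 hd _ _ _ _ h
  · exact (List.pairwise_iff_getElem.1 hd _ _ _ _ h).symm

lemma ArcDisjointSCycles.mono {k : ℕ} (h : ArcDisjointSCycles D S m) (hk : k ≤ m) :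
    ArcDisjointSCycles D S k := by
  obtain ⟨f, hf, hd⟩ := h
  exact ⟨fun i => f (Fin.castLE hk i), fun i => hf _,
    fun i j hij => hd _ _ fun h => hij (Fin.castLE_injective hk h)⟩

lemma ArcDisjointSCycles.le_card_adj [Finite V] {s : V} (hs : s ∈ S)
    (h : ArcDisjointSCycles D S m) : m ≤ Nat.card {t // D.Adj s t} := by
  obtain ⟨f, hf, hd⟩ := h
  choose t ht using fun i => exists_mem_cycArcs_of_mem ((hf i).2 s hs)
  have hinj :
      Function.Injective fun i => (⟨t i, (hf i).1.2.2 _ (ht i)⟩ : {t // D.Adj s t}) := by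
    intro i j hij
    by_contra hne
    refine Set.disjoint_left.1 (hd i j hne) (ht i) ?_
    rw [show t i = t j from congrArg Subtype.val hij]
    exact ht j
  simpa using Nat.card_le_card_of_injective _ hinj

lemma lambdaS_le_card_adj [Finite V] {s : V} (hs : s ∈ S) :
    lambdaS D S ≤ Nat.card {t // D.Adj s t} :=
  csSup_le' fun _ h => h.le_card_adj hs

lemma ArcDisjointSCycles.le_lambdaS [Finite V] {s : V} (hs : s ∈ S)
    (h : ArcDisjointSCycles D S m) : m ≤ lambdaS D S :=
  le_csSup ⟨_, fun _ h' => h'.le_card_adj hs⟩ h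

lemma lambdaS_le_of_not_arcDisjointSCycles (h : ¬ ArcDisjointSCycles D S (m + 1)) :
    lambdaS D S ≤ m :=
  csSup_le' fun _ hk => Nat.le_of_lt_succ (lt_of_not_ge fun hle => h (hk.mono hle))

lemma lambdaK_eq_of_lambdaS_eq [Fintype V] {k c : ℕ} {S : Finset V} (hS : S.card = k)
    (hSc : lambdaS D S = c) (hle : ∀ T : Finset V, T.card = k → c ≤ lambdaS D T) :
    lambdaK D k = c :=
  IsLeast.csInf_eq ⟨⟨S, hS, hSc⟩, by rintro _ ⟨T, hT, rfl⟩; exact hle T hT⟩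

end General

section CompleteDigraph

lemma card_completeDigraph_adj {n : ℕ} (s : Fin n) :
    Nat.card {t // (completeDigraph n).Adj s t} = n - 1 := by
  simp [completeDigraph]

lemma lambdaS_completeDigraph_le {n : ℕ} {S : Set (Fin n)} {s : Fin n} (hs : s ∈ S) :
    lambdaS (completeDigraph n) S ≤ n - 1 :=
  card_completeDigraph_adj s ▸ lambdaS_le_card_adj hs

lemma arcDisjointSCycles_completeDigraph_pair {n : ℕ} {u v w x : Fin n}
    (h : [u, v, w, x].Nodup) : ArcDisjointSCycles (completeDigraph n) {u, v} 3 := by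
  simp only [List.nodup_cons, List.mem_cons, List.not_mem_nil] at h
  refine arcDisjointSCycles_of_pairwise (L := [[u, v], [u, w, v, x], [u, x, v, w]]) ?_ ?_
  · aesop (add norm simp [IsSCycle, IsDiCycle, completeDigraph])
  · aesop (add norm simp [cycArcs, Set.disjoint_left])

lemma arcDisjointSCycles_completeDigraph_four_two (S : Set (Fin 4)) :
    ArcDisjointSCycles (completeDigraph 4) S 2 := by
  refine arcDisjointSCycles_of_pairwise (L := [[0, 1, 2, 3], [0, 3, 2, 1]]) ?_ ?_
  · simp only [List.mem_cons, List.not_mem_nil, or_false, forall_eq_or_imp, forall_eq]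
    exact ⟨⟨by simp [IsDiCycle, completeDigraph], fun s _ => by fin_cases s <;> decide⟩,
      by simp [IsDiCycle, completeDigraph], fun s _ => by fin_cases s <;> decide⟩
  · aesop (add norm simp [cycArcs, Set.disjoint_left])

lemma lambdaS_completeDigraph_four_of_card_eq_two {S : Finset (Fin 4)} (hS : S.card = 2) :
    lambdaS (completeDigraph 4) S = 3 := by
  obtain ⟨u, v, huv, rfl⟩ := Finset.card_eq_two.1 hS
  obtain ⟨w, x, h⟩ : ∃ w x : Fin 4, [u, v, w, x].Nodup := by revert u v; decide
  rw [Finset.coe_pair]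
  refine le_antisymm (lambdaS_completeDigraph_le (s := u) (by simp)) ?_
  exact (arcDisjointSCycles_completeDigraph_pair h).le_lambdaS (s := u) (by simp)

lemma two_le_lambdaS_completeDigraph_four {S : Set (Fin 4)} (hS : S.Nonempty) :
    2 ≤ lambdaS (completeDigraph 4) S :=
  (arcDisjointSCycles_completeDigraph_four_two S).le_lambdaS hS.some_mem

def triangleArcs : Bool → Finset (Fin 4 × Fin 4)
  | true => {(0, 1), (1, 2), (2, 0)}
  | false => {(1, 0), (2, 1), (0, 2)}

lemma card_triangleArcs (b : Bool) : (triangleArcs b).card = 3 := by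
  cases b <;> rfl

lemma exists_two_le_card_filter_triangleArcs {l : List (Fin 4)} (hl : l.Nodup) (h0 : 0 ∈ l)
    (h1 : 1 ∈ l) (h2 : 2 ∈ l) :
    ∃ b, 2 ≤ ((triangleArcs b).filter (· ∈ l.zip (l.rotate 1))).card := by
  have hlen : l.length ≤ 4 := by simpa using hl.length_le_card
  revert hl h0 h1 h2
  match l, hlen with
  | [], _ | [_], _ | [_, _], _ | [_, _, _], _ | [_, _, _, _], _ => decide +revert

lemma not_arcDisjointSCycles_completeDigraph_four_three {S : Set (Fin 4)} (h0 : 0 ∈ S)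
    (h1 : 1 ∈ S) (h2 : 2 ∈ S) : ¬ ArcDisjointSCycles (completeDigraph 4) S 3 := by
  rintro ⟨f, hf, hd⟩
  choose b hb using fun i => exists_two_le_card_filter_triangleArcs (hf i).1.1
    ((hf i).2 0 h0) ((hf i).2 1 h1) ((hf i).2 2 h2)
  obtain ⟨i, j, hij, hbij⟩ := Fintype.exists_ne_map_eq_of_card_lt b (by simp)
  have hcard : (triangleArcs (b i)).card <
      ((triangleArcs (b i)).filter (· ∈ (f i).zip ((f i).rotate 1))).card +
        ((triangleArcs (b i)).filter (· ∈ (f j).zip ((f j).rotate 1))).card := by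
    rw [card_triangleArcs]
    have := hb i
    have := hbij ▸ hb j
    omega
  obtain ⟨p, hp⟩ := Finset.inter_nonempty_of_card_lt_card_add_card
    (Finset.filter_subset _ _) (Finset.filter_subset _ _) hcard
  simp only [Finset.mem_inter, Finset.mem_filter] at hp
  exact Set.disjoint_left.1 (hd i j hij) hp.1.2 hp.2.2

lemma lambdaS_completeDigraph_four_eq_two {S : Set (Fin 4)} (h0 : 0 ∈ S) (h1 : 1 ∈ S)
    (h2 : 2 ∈ S) : lambdaS (completeDigraph 4) S = 2 :=
  le_antisymm
    (lambdaS_le_of_not_arcDisjointSCycles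
      (not_arcDisjointSCycles_completeDigraph_four_three h0 h1 h2))
    (two_le_lambdaS_completeDigraph_four ⟨0, h0⟩)

end CompleteDigraph

/-- `λ_2^c(K↔_4) = 3` and `λ_k^c(K↔_4) = 2` for `k ∈ {3, 4}`. -/
theorem lambdaK_completeDigraph_four :
    lambdaK (completeDigraph 4) 2 = 3 ∧
    lambdaK (completeDigraph 4) 3 = 2 ∧
    lambdaK (completeDigraph 4) 4 = 2 := by
  have two_le {k : ℕ} (hk : 0 < k) (T : Finset (Fin 4)) (hT : T.card = k) :
      2 ≤ lambdaS (completeDigraph 4) T :=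
    two_le_lambdaS_completeDigraph_four (by simpa using Finset.card_pos.1 (hT ▸ hk))
  refine ⟨?_, ?_, ?_⟩
  · exact lambdaK_eq_of_lambdaS_eq (S := {0, 1}) rfl
      (lambdaS_completeDigraph_four_of_card_eq_two rfl)
      fun T hT => (lambdaS_completeDigraph_four_of_card_eq_two hT).ge
  · exact lambdaK_eq_of_lambdaS_eq (S := {0, 1, 2}) rfl
      (lambdaS_completeDigraph_four_eq_two (by simp) (by simp) (by simp)) (two_le (by norm_num))
  · exact lambdaK_eq_of_lambdaS_eq (S := Finset.univ) rfl
      (lambdaS_completeDigraph_four_eq_two (by simp) (by simp) (by simp)) (two_le (by norm_num))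
end

section
/- Let K↔_4 be the complete digraph on 4 vertices and let S ⊆ V(K↔_4) with |S| = 3. Then there do not exist three pairwise arc-disjoint S-cycles in K↔_4; equivalently, λ_S^c(K↔_4) ≤ 2. -/
def extOne (ls : List (List (Fin 4))) : List (List (Fin 4)) :=
  ls.flatMap (fun l => (List.finRange 4).filterMap
    (fun a => if a ∈ l then none else some (a :: l)))

def L : ℕ → List (List (Fin 4))
  | 0 => [[]]
  | n + 1 => extOne (L n)

def cands : List (List (Fin 4)) := L 0 ++ L 1 ++ L 2 ++ L 3 ++ L 4

lemma mem_L {l : List (Fin 4)} (h : l.Nodup) : l ∈ L l.length := by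
  induction l with
  | nil => simp [L]
  | cons a l ih =>
    have hl := List.nodup_cons.mp h
    have : a :: l ∈ extOne (L l.length) := by
      refine List.mem_flatMap.mpr ⟨l, ih hl.2, ?_⟩
      refine List.mem_filterMap.mpr ⟨a, List.mem_finRange a, ?_⟩
      simp [hl.1]
    simpa [L] using this

lemma mem_cands {l : List (Fin 4)} (h : l.Nodup) : l ∈ cands := by
  have h4 : l.length ≤ 4 := by simpa using h.length_le_card
  have hm := mem_L h
  have : l.length = 0 ∨ l.length = 1 ∨ l.length = 2 ∨ l.length = 3 ∨ l.length = 4 := by omega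
  rcases this with h0 | h0 | h0 | h0 | h0 <;> rw [h0] at hm <;>
    simp [cands, List.mem_append, hm]

def Q (S : Finset (Fin 4)) (l : List (Fin 4)) : Prop :=
  l.Nodup ∧ 2 ≤ l.length ∧ (∀ p ∈ l.zip (l.rotate 1), p.1 ≠ p.2) ∧ ∀ s ∈ S, s ∈ l

instance : ∀ S l, Decidable (Q S l) := fun S l => by unfold Q; infer_instance

def Dsj (l l' : List (Fin 4)) : Prop := ∀ p ∈ l.zip (l.rotate 1), p ∉ l'.zip (l'.rotate 1)

instance : ∀ l l', Decidable (Dsj l l') := fun l l' => by unfold Dsj; infer_instance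

lemma isSCycle_iff (S : Finset (Fin 4)) (l : List (Fin 4)) :
    IsSCycle (completeDigraph 4) ↑S l ↔ Q S l := by
  simp only [IsSCycle, IsDiCycle, Q, completeDigraph, Finset.mem_coe, and_assoc]

lemma disjoint_iff_dsj (l l' : List (Fin 4)) :
    Disjoint (cycArcs l) (cycArcs l') ↔ Dsj l l' := by
  simp [Set.disjoint_left, cycArcs, Dsj]

set_option maxRecDepth 100000 in
set_option maxHeartbeats 4000000 in
lemma brute : ∀ S : Finset (Fin 4), S.card = 3 →
    ∀ l1 ∈ cands, Q S l1 → ∀ l2 ∈ cands, (Q S l2 ∧ Dsj l1 l2) →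
    ∀ l3 ∈ cands, Q S l3 → ¬(Dsj l1 l3 ∧ Dsj l2 l3) := by decide

/-- For every `S ⊆ V(K↔_4)` with `|S| = 3` there do not exist three
pairwise arc-disjoint `S`-cycles; equivalently, `λ_S^c(K↔_4) ≤ 2`. -/
theorem completeDigraph_four_lambdaS_le_two (S : Finset (Fin 4)) (hS : S.card = 3) :
    ¬ ArcDisjointSCycles (completeDigraph 4) ↑S 3 ∧
    lambdaS (completeDigraph 4) ↑S ≤ 2 := by
  have hnot : ¬ ArcDisjointSCycles (completeDigraph 4) ↑S 3 := by
    rintro ⟨f, hf, hdisj⟩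
    have hQ : ∀ i, Q S (f i) := fun i => (isSCycle_iff S (f i)).mp (hf i)
    have hmem : ∀ i, f i ∈ cands := fun i => mem_cands (hQ i).1
    have hD : ∀ i j, i ≠ j → Dsj (f i) (f j) :=
      fun i j h => (disjoint_iff_dsj _ _).mp (hdisj i j h)
    exact brute S hS (f 0) (hmem 0) (hQ 0) (f 1) (hmem 1) ⟨hQ 1, hD 0 1 (by decide)⟩
      (f 2) (hmem 2) (hQ 2) ⟨hD 0 2 (by decide), hD 1 2 (by decide)⟩
  refine ⟨hnot, ?_⟩
  refine csSup_le' ?_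
  rintro m hm
  by_contra hlt
  push_neg at hlt
  have h3 : 3 ≤ m := hlt
  apply hnot
  obtain ⟨f, hf, hd⟩ := hm
  refine ⟨fun i => f (Fin.castLE h3 i), fun i => hf _, fun i j hij => hd _ _ ?_⟩
  exact fun h => hij (Fin.castLE_injective h3 h)
end

section
/- Let D be a symmetric digraph and let u, v be distinct vertices of D, with S = {u, v}. Then D contains two arc-disjoint S-cycles if and only if the underlying undirected graph of D contains two internally disjoint paths between u and v. -/
/-- The underlying undirected simple graph of a digraph `D`. -/
def underlyingGraph {V : Type*} (D : Digraph V) : SimpleGraph V where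
  Adj x y := x ≠ y ∧ (D.Adj x y ∨ D.Adj y x)
  symm := ⟨fun x y h => ⟨h.1.symm, h.2.symm⟩⟩
  loopless := ⟨fun x h => h.1 rfl⟩

open List SimpleGraph

section Lists

variable {α : Type*}

theorem List.IsRotated.cycArcs_eq {l l' : List α} (h : l ~r l') : cycArcs l = cycArcs l' := by
  obtain ⟨n, rfl⟩ := h
  ext x
  simp only [cycArcs, Set.mem_ofPred_eq, zip_eq_zipWith]
  rw [rotate_rotate, add_comm, ← rotate_rotate, ← zipWith_rotate_distrib _ _ _ _ (by simp),
    mem_rotate]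

theorem isChain_cons_append_singleton_iff {R : α → α → Prop} {x : α} {t : List α} :
    IsChain R (x :: t ++ [x]) ↔ ∀ p ∈ cycArcs (x :: t), R p.1 p.2 := by
  rw [isChain_iff_forall₂, forall₂_iff_zip, dropLast_concat]
  simp [cycArcs, rotate_cons_succ]

theorem fst_ne_snd_of_mem_cycArcs {l : List α} (hnd : l.Nodup) (hl : 2 ≤ l.length) {p : α × α}
    (hp : p ∈ cycArcs l) : p.1 ≠ p.2 := by
  obtain _ | ⟨x, _ | ⟨y, t⟩⟩ := l
  · simp at hl
  · simp at hl
  have hchain : IsChain (· ≠ ·) (x :: y :: t ++ [x]) := by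
    refine isChain_append.mpr ⟨hnd.isChain, isChain_singleton x, fun z hz w hw => ?_⟩
    rw [head?_cons, Option.mem_some_iff] at hw
    rw [getLast?_cons_cons] at hz
    exact fun hzw => (nodup_cons.mp hnd).1 (hw ▸ hzw ▸ mem_of_mem_getLast? hz)
  exact isChain_cons_append_singleton_iff.mp hchain p hp

end Lists

section Cycles

variable {V : Type*}

theorem IsDiCycle.isRotated {D : Digraph V} {l l' : List V} (hC : IsDiCycle D l) (h : l ~r l') :
    IsDiCycle D l' :=
  ⟨h.nodup_iff.mp hC.1, h.perm.length_eq ▸ hC.2.1,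
    fun p hp => hC.2.2 p (show p ∈ cycArcs l from h.cycArcs_eq ▸ hp)⟩

theorem IsDiCycle.exists_walk_isRotated {D : Digraph V} {l : List V} (hC : IsDiCycle D l) {u : V}
    (hu : u ∈ l) : ∃ c : (underlyingGraph D).Walk u u, c.support.tail ~r l := by
  obtain ⟨a, b, rfl⟩ := append_of_mem hu
  have hrot : a ++ u :: b ~r u :: (b ++ a) := isRotated_append
  have hC' := hC.isRotated hrot
  have hchain : IsChain (underlyingGraph D).Adj (u :: (b ++ a) ++ [u]) :=
    isChain_cons_append_singleton_iff.mpr fun p hp =>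
      ⟨fst_ne_snd_of_mem_cycArcs hC'.1 hC'.2.1 hp, Or.inl (hC'.2.2 p hp)⟩
  refine ⟨(Walk.ofSupport _ (by simp) hchain).copy (by simp) (by simp), ?_⟩
  have htail : (u :: (b ++ a) ++ [u]).tail = (u :: (b ++ a)).rotate 1 := by
    simp [rotate_cons_succ]
  rw [Walk.support_copy, Walk.support_ofSupport, htail]
  exact (IsRotated.forall _ 1).trans hrot.symm

namespace SimpleGraph.Walk

variable {G : SimpleGraph V}

def InternallyDisjoint {u v : V} (p q : G.Walk u v) : Prop :=
  ∀ w, w ∈ p.support → w ∈ q.support → w = u ∨ w = v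

theorem IsPath.start_notMem_support_tail {u v : V} {p : G.Walk u v} (hp : p.IsPath) :
    u ∉ p.support.tail :=
  (nodup_cons.mp (p.cons_tail_support ▸ hp.support_nodup)).1

theorem rotate_one_dropLast_support {u : V} (c : G.Walk u u) :
    c.support.dropLast.rotate 1 = c.support.tail := by
  cases c with
  | nil => rfl
  | cons h p =>
    simp [dropLast_cons_of_ne_nil p.support_ne_nil, rotate_cons_succ]

theorem cycArcs_support_tail {u : V} (c : G.Walk u u) :
    cycArcs c.support.tail = {x | ∃ d ∈ c.darts, d.toProd = x} := by
  rw [← rotate_one_dropLast_support, (IsRotated.forall _ _).cycArcs_eq]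
  ext x
  change x ∈ c.support.dropLast.zip (c.support.dropLast.rotate 1) ↔ _
  rw [rotate_one_dropLast_support, ← map_fst_darts, ← map_snd_darts, zip_map']
  simp

theorem exists_isPath_internallyDisjoint_of_nodup_support_tail {u v : V} {c : G.Walk u u}
    (hc : c.support.tail.Nodup) (hv : v ∈ c.support) (huv : u ≠ v) :
    ∃ p q : G.Walk u v, p.IsPath ∧ q.IsPath ∧ p.InternallyDisjoint q ∧ p.darts ⊆ c.darts := by
  classical
  have hpr := take_spec c hv
  set p := c.takeUntil v hv
  set r := c.dropUntil v hv
  have hnd : (p.support.tail ++ r.support.tail).Nodup := by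
    rw [← tail_support_append, hpr]
    exact hc
  rw [nodup_append'] at hnd
  have hvp : v ∈ p.support.tail := end_mem_tail_support_of_ne huv p
  have hur : u ∈ r.support.tail := end_mem_tail_support_of_ne huv.symm r
  refine ⟨p, r.reverse, ?_, ?_, ?_, ?_⟩
  · rw [isPath_def, ← cons_tail_support, nodup_cons]
    exact ⟨fun h => hnd.2.2 h hur, hnd.1⟩
  · rw [isPath_reverse_iff, isPath_def, ← cons_tail_support, nodup_cons]
    exact ⟨fun h => hnd.2.2 hvp h, hnd.2.1⟩
  · intro w hwp hwr
    rw [support_reverse, mem_reverse] at hwr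
    rw [mem_support_iff] at hwp hwr
    rcases hwp with rfl | hwp
    · exact Or.inl rfl
    rcases hwr with rfl | hwr
    · exact Or.inr rfl
    exact (hnd.2.2 hwp hwr).elim
  · intro d hd
    rw [← hpr, darts_append]
    exact mem_append_left _ hd

theorem IsTrail.disjoint_cycArcs_support_tail_reverse {u : V} {c : G.Walk u u}
    (hc : c.IsTrail) : Disjoint (cycArcs c.support.tail) (cycArcs c.reverse.support.tail) := by
  rw [cycArcs_support_tail, cycArcs_support_tail, Set.disjoint_left]
  rintro _ ⟨d, hd, rfl⟩ ⟨d', hd', hdd'⟩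
  rw [darts_reverse, mem_reverse, mem_map] at hd'
  obtain ⟨e, he, rfl⟩ := hd'
  -- a common arc comes from two darts `d` and `d.symm` of `c`, which have the same edge
  have hed : e = d.symm := by
    rw [← Dart.symm_symm e, Dart.ext _ _ hdd']
  have := inj_on_of_nodup_map hc.edges_nodup he hd (by rw [hed, Dart.edge_symm])
  exact Dart.symm_ne d (hed ▸ this)

theorem IsPath.isCycle_append_reverse {u v : V} {p q : G.Walk u v} (hp : p.IsPath)
    (hq : q.IsPath) (hpq : p ≠ q) (hdisj : p.InternallyDisjoint q) :
    (p.append q.reverse).IsCycle := by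
  refine hp.isCycle_append hq.reverse (fun w hwp hwq => ?_) ?_
  · have hwu : w ≠ u := fun h => hp.start_notMem_support_tail (h ▸ hwp)
    have hwv : w ≠ v := fun h => hq.reverse.start_notMem_support_tail (h ▸ hwq)
    have hwq' : w ∈ q.support := by simpa using mem_of_mem_tail hwq
    exact (hdisj w (mem_of_mem_tail hwp) hwq').elim hwu hwv
  · by_contra! h
    exact hpq (eq_of_length_le_one h.1 (by simpa using h.2))

end SimpleGraph.Walk

open SimpleGraph.Walk

theorem IsDiCycle.exists_internallyDisjoint_paths {D : Digraph V} {l : List V} (hC : IsDiCycle D l)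
    {u v : V} (hu : u ∈ l) (hv : v ∈ l) (huv : u ≠ v) :
    ∃ p q : (underlyingGraph D).Walk u v, p.IsPath ∧ q.IsPath ∧ p.InternallyDisjoint q ∧
      ∀ d ∈ p.darts, d.toProd ∈ cycArcs l := by
  obtain ⟨c, hc⟩ := hC.exists_walk_isRotated hu
  obtain ⟨p, q, hp, hq, hpq, hpc⟩ := exists_isPath_internallyDisjoint_of_nodup_support_tail
    (hc.nodup_iff.mpr hC.1) (mem_of_mem_tail (hc.mem_iff.mpr hv)) huv
  refine ⟨p, q, hp, hq, hpq, fun d hd => ?_⟩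
  rw [← hc.cycArcs_eq, cycArcs_support_tail]
  exact ⟨d, hpc hd, rfl⟩

theorem isSCycle_support_tail_of_isCycle {D : Digraph V} (hsym : ∀ x y, D.Adj x y → D.Adj y x)
    {S : Set V} {u : V} {c : (underlyingGraph D).Walk u u} (hc : c.IsCycle)
    (hS : ∀ s ∈ S, s ∈ c.support) : IsSCycle D S c.support.tail := by
  refine ⟨⟨hc.support_nodup, ?_, fun p hp => ?_⟩, fun s hs => ?_⟩
  · rw [List.length_tail, length_support]
    have := hc.three_le_length
    omega
  · obtain ⟨d, -, rfl⟩ := (cycArcs_support_tail c).subst (motive := (p ∈ ·)) hp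
    exact d.adj.2.elim id (hsym _ _)
  · rcases (mem_support_iff c).mp (hS s hs) with rfl | h
    · exact end_mem_tail_support hc.not_nil
    · exact h

theorem arcDisjointSCycles_two_of_isCycle {D : Digraph V} (hsym : ∀ x y, D.Adj x y → D.Adj y x)
    {S : Set V} {u : V} {c : (underlyingGraph D).Walk u u} (hc : c.IsCycle)
    (hS : ∀ s ∈ S, s ∈ c.support) : ArcDisjointSCycles D S 2 := by
  have hS' : ∀ s ∈ S, s ∈ c.reverse.support := fun s hs => by simpa using hS s hs
  have hdisj := hc.isTrail.disjoint_cycArcs_support_tail_reverse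
  refine ⟨![c.support.tail, c.reverse.support.tail], fun i => ?_, fun i j hij => ?_⟩
  · fin_cases i
    · exact isSCycle_support_tail_of_isCycle hsym hc hS
    · exact isSCycle_support_tail_of_isCycle hsym hc.reverse hS'
  · fin_cases i <;> fin_cases j
    · exact absurd rfl hij
    · exact hdisj
    · exact hdisj.symm
    · exact absurd rfl hij

end Cycles

theorem symmetric_two_arcDisjoint_iff_two_internallyDisjoint_paths_general {V : Type*}
    (D : Digraph V) (hsym : ∀ u v, D.Adj u v → D.Adj v u) (u v : V) (huv : u ≠ v) :
    ArcDisjointSCycles D {u, v} 2 ↔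
      ∃ p q : (underlyingGraph D).Walk u v, p.IsPath ∧ q.IsPath ∧ p ≠ q ∧
        ∀ w, w ∈ p.support → w ∈ q.support → w = u ∨ w = v := by
  constructor
  · rintro ⟨C, hC, hCdisj⟩
    have hS : ∀ i, u ∈ C i ∧ v ∈ C i := fun i => ⟨(hC i).2 u (by simp), (hC i).2 v (by simp)⟩
    obtain ⟨p, q, hp, hq, hpq, hpC⟩ :=
      (hC 0).1.exists_internallyDisjoint_paths (hS 0).1 (hS 0).2 huv
    obtain ⟨p', -, hp', -, -, hp'C⟩ :=
      (hC 1).1.exists_internallyDisjoint_paths (hS 1).1 (hS 1).2 huv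
    by_cases hqp : p = q
    -- then `p` meets any `u`–`v` path only in `u, v`, and `p' ≠ p` as their arcs lie on distinct cycles
    · subst hqp
      refine ⟨p, p', hp, hp', ?_, fun w hw _ => hpq w hw hw⟩
      rintro rfl
      have hd := Walk.firstDart_mem_darts (p := p) (Walk.not_nil_of_ne huv)
      exact Set.disjoint_left.mp (hCdisj 0 1 (by decide)) (hpC _ hd) (hp'C _ hd)
    · exact ⟨p, q, hp, hq, hqp, hpq⟩
  · rintro ⟨p, q, hp, hq, hpq, hdisj⟩
    refine arcDisjointSCycles_two_of_isCycle hsym (hp.isCycle_append_reverse hq hpq hdisj) ?_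
    rintro s (rfl | rfl) <;> simp

/-- For a symmetric digraph `D` and distinct vertices `u, v` with
`S = {u, v}`, `D` contains two arc-disjoint `S`-cycles iff the underlying undirected
graph of `D` contains two internally disjoint paths between `u` and `v`. -/
theorem symmetric_two_arcDisjoint_iff_two_internallyDisjoint_paths {V : Type*}
    (D : Digraph V) (hloopless : ∀ v, ¬ D.Adj v v)
    (hsym : ∀ u v, D.Adj u v → D.Adj v u) (u v : V) (huv : u ≠ v) :
    ArcDisjointSCycles D {u, v} 2 ↔
      ∃ p q : (underlyingGraph D).Walk u v, p.IsPath ∧ q.IsPath ∧ p ≠ q ∧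
        ∀ w, w ∈ p.support → w ∈ q.support → w = u ∨ w = v :=
  symmetric_two_arcDisjoint_iff_two_internallyDisjoint_paths_general D hsym u v huv
end
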